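/- arXiv:1707.05526 — 11 statements merged into one kernel-verified Lean document; each statement's English description precedes it below -/
import Mathlib

section
/- Let β be an alternating bicharacter of type I on a finite abelian group T. Then the map sending u ∈ T to u^⊥ := {v ∈ T ∣ β(u,v) = 1} is a bijection from T onto the set of all subgroups of T of index at most 2. -/
/-!
The map `u ↦ β(u, ·)` is a homomorphism from `T` to its group of real characters `T →* ℝˣ`.
Since `β` is alternating it is antisymmetric, `β(u, v) β(v, u) = 1`, so its kernel is the radical,
which is trivial; as there are at most `|T|` real characters (they embed into the complex ones),
it is a bijection. A real character of a finite group takes only the values `±1`, hence is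
determined by its kernel, a subgroup of index at most 2; conversely every subgroup of index 2
is the kernel of the character that is `-1` off it.
-/

/-- An alternating bicharacter on a (multiplicative) finite abelian group `T`,
with values in `ℝˣ`. -/
def IsAltBichar {T : Type*} [CommGroup T] (β : T → T → ℝˣ) : Prop :=
  (∀ u v w : T, β (u * v) w = β u w * β v w) ∧
  (∀ u v w : T, β u (v * w) = β u v * β u w) ∧
  (∀ u : T, β u u = 1)

lemma Units.real_eq_one_or_neg_one_of_pow_eq_one {x : ℝˣ} {n : ℕ} (hn : n ≠ 0)
    (hx : x ^ n = 1) : x = 1 ∨ x = -1 := by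
  have : (x : ℝ) ^ n = 1 := by rw [← Units.val_pow_eq_pow_val, hx, Units.val_one]
  rcases (pow_eq_one_iff_of_ne_zero hn).1 this with h | h
  · exact .inl (Units.ext h)
  · exact .inr (Units.ext h.1)

namespace MonoidHom

variable {T : Type*} [CommGroup T] [Finite T]

lemma eq_one_or_neg_one (χ : T →* ℝˣ) (t : T) : χ t = 1 ∨ χ t = -1 :=
  Units.real_eq_one_or_neg_one_of_pow_eq_one Nat.card_pos.ne' <| by
    rw [← map_pow, pow_card_eq_one', map_one]

lemma index_ker_le_two (χ : T →* ℝˣ) : χ.ker.index ≤ 2 := by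
  rw [Subgroup.index_ker, ← SetLike.coe_sort_coe, coe_range, Nat.card_coe_set_eq]
  calc (Set.range χ).ncard ≤ ({1, -1} : Set ℝˣ).ncard :=
        Set.ncard_le_ncard (Set.range_subset_iff.2 χ.eq_one_or_neg_one)
    _ ≤ 2 := (Set.ncard_insert_le _ _).trans (by simp)

lemma ker_injective : Function.Injective (fun χ : T →* ℝˣ => χ.ker) := by
  intro χ ψ h
  ext t
  have ht : χ t = 1 ↔ ψ t = 1 := SetLike.ext_iff.1 h t
  rcases χ.eq_one_or_neg_one t with hχ | hχ <;> rcases ψ.eq_one_or_neg_one t with hψ | hψ <;>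
    simp_all

lemma exists_ker_eq_of_index_le_two {S : Subgroup T} (hS : S.index ≤ 2) :
    ∃ χ : T →* ℝˣ, χ.ker = S := by
  classical
  obtain hS | hS : S.index = 1 ∨ S.index = 2 := by
    have := S.index_ne_zero_of_finite; omega
  · exact ⟨1, by rw [ker_one, Subgroup.index_eq_one.1 hS]⟩
  · refine ⟨{ toFun := fun v => if v ∈ S then 1 else -1, map_one' := by simp, map_mul' := ?_ }, ?_⟩
    · intro a b
      simp only [Subgroup.mul_mem_iff_of_index_two hS]
      split_ifs <;> simp_all
    · ext v
      simp [mem_ker]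

end MonoidHom

lemma CommGroup.card_monoidHom_units_real_le (T : Type*) [CommGroup T] [Finite T] :
    Nat.card (T →* ℝˣ) ≤ Nat.card T := by
  let toComplex : (T →* ℝˣ) → (T →* ℂˣ) :=
    fun χ => (Units.map (algebraMap ℝ ℂ : ℝ →* ℂ)).comp χ
  have h : Function.Injective toComplex := fun χ ψ h => by
    ext t
    simpa [toComplex] using congrArg (fun φ : T →* ℂˣ => (φ t : ℂ)) h
  calc Nat.card (T →* ℝˣ) ≤ Nat.card (T →* ℂˣ) := Nat.card_le_card_of_injective _ h
    _ = Nat.card T := CommGroup.card_monoidHom_of_hasEnoughRootsOfUnity T ℂ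

namespace IsAltBichar

variable {T : Type*} [CommGroup T] {β : T → T → ℝˣ}

def toDual (hβ : IsAltBichar β) : T →* T →* ℝˣ :=
  MonoidHom.mk' (fun u => MonoidHom.mk' (β u) (hβ.2.1 u)) fun u u' => MonoidHom.ext (hβ.1 u u')

lemma mul_swap_eq_one (hβ : IsAltBichar β) (u v : T) : β u v * β v u = 1 := by
  simpa [hβ.1, hβ.2.1, hβ.2.2] using hβ.2.2 (u * v)

lemma toDual_injective (hβ : IsAltBichar β) (hI : ∀ t : T, (∀ u : T, β u t = 1) → t = 1) :
    Function.Injective hβ.toDual := by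
  refine (injective_iff_map_eq_one _).2 fun t ht => hI t fun u => ?_
  have htu : β t u = 1 := DFunLike.congr_fun ht u
  simpa [htu] using hβ.mul_swap_eq_one t u

lemma toDual_bijective [Finite T] (hβ : IsAltBichar β)
    (hI : ∀ t : T, (∀ u : T, β u t = 1) → t = 1) : Function.Bijective hβ.toDual :=
  (hβ.toDual_injective hI).bijective_of_nat_card_le (CommGroup.card_monoidHom_units_real_le T)

end IsAltBichar

/-- Let `β` be an alternating bicharacter of type I (trivial radical) on a finite
abelian group `T`.  Then `u ↦ u^⊥ = {v ∣ β(u,v) = 1}` is a bijection from `T` onto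
the set of all subgroups of `T` of index at most 2. -/
theorem stmt1 {T : Type*} [CommGroup T] [Fintype T]
    (β : T → T → ℝˣ) (hβ : IsAltBichar β)
    (hI : ∀ t : T, (∀ u : T, β u t = 1) → t = 1) :
    ∃ F : T → Subgroup T,
      (∀ u : T, (F u : Set T) = {v : T | β u v = 1}) ∧
      Function.Injective F ∧
      Set.range F = {S : Subgroup T | S.index ≤ 2} := by
  obtain ⟨hinj, hsurj⟩ := hβ.toDual_bijective hI
  refine ⟨fun u => (hβ.toDual u).ker, fun u => rfl, MonoidHom.ker_injective.comp hinj, ?_⟩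
  ext S
  constructor
  · rintro ⟨u, rfl⟩
    exact (hβ.toDual u).index_ker_le_two
  · intro hS
    obtain ⟨χ, rfl⟩ := MonoidHom.exists_ker_eq_of_index_le_two hS
    obtain ⟨u, rfl⟩ := hsurj χ
    exact ⟨u, rfl⟩
end

section
/- Let β be an alternating bicharacter of type II on a finite abelian group T. Then the map sending the coset [u] = u⟨f_β⟩ to u^⊥ := {v ∈ T ∣ β(u,v) = 1} is a well-defined bijection from the quotient group T/⟨f_β⟩ onto the set of all subgroups S of T such that f_β ∈ S and [T : S] ≤ 2. -/
open Finset

lemma aux_real_unit_pm (x : ℝˣ) (n : ℕ) (hn : n ≠ 0) (h : x ^ n = 1) : x = 1 ∨ x = -1 := by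
  have hr : ((x : ℝ)) ^ n = 1 := by
    have := congrArg Units.val h
    push_cast at this
    exact this
  rcases (pow_eq_one_iff_of_ne_zero hn).mp hr with h1 | h2
  · left; ext; exact h1
  · right; ext; exact h2.1

lemma aux_char_sum {G : Type*} [CommGroup G] [Fintype G] (χ : G →* ℝˣ)
    (h : ∃ g, χ g ≠ 1) : ∑ g : G, ((χ g : ℝ)) = 0 := by
  obtain ⟨g₀, hg⟩ := h
  have key : (χ g₀ : ℝ) * ∑ g : G, ((χ g : ℝ)) = ∑ g : G, ((χ g : ℝ)) := by
    rw [Finset.mul_sum]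
    exact Fintype.sum_equiv (Equiv.mulLeft g₀) _ _ (fun g => by
      rw [Equiv.coe_mulLeft, map_mul]; push_cast; ring)
  have hne : (χ g₀ : ℝ) ≠ 1 := fun hh => hg (Units.ext hh)
  have h0 : ((χ g₀ : ℝ) - 1) * ∑ g : G, ((χ g : ℝ)) = 0 := by
    rw [sub_mul, one_mul, key, sub_self]
  rcases mul_eq_zero.mp h0 with h' | h'
  · exact absurd (by linarith : (χ g₀ : ℝ) = 1) hne
  · exact h'

section Aux

variable {T : Type*} [CommGroup T] [Fintype T] (β : T → T → ℝˣ)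

/-- `β u ·` as a monoid hom. -/
def auxRhom (hβ : IsAltBichar β) (u : T) : T →* ℝˣ where
  toFun := β u
  map_one' := by
    have h := hβ.2.1 u 1 1
    rw [one_mul] at h
    exact (left_eq_mul.mp h)
  map_mul' := fun v w => hβ.2.1 u v w

/-- `β · v` as a monoid hom. -/
def auxLhom (hβ : IsAltBichar β) (v : T) : T →* ℝˣ where
  toFun := fun u => β u v
  map_one' := by
    have h := hβ.1 1 1 v
    rw [one_mul] at h
    exact (left_eq_mul.mp h)
  map_mul' := fun u w => hβ.1 u w v

lemma aux_pm (hβ : IsAltBichar β) (u v : T) : β u v = 1 ∨ β u v = -1 := by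
  apply aux_real_unit_pm _ (Fintype.card T) Fintype.card_ne_zero
  have h : β u v ^ Fintype.card T = auxRhom β hβ u (v ^ Fintype.card T) :=
    (map_pow (auxRhom β hβ u) v (Fintype.card T)).symm
  rw [h, pow_card_eq_one, map_one]

lemma aux_symm (hβ : IsAltBichar β) (u v : T) : β u v = β v u := by
  have h : β u v * β v u = 1 := by
    have e1 := hβ.1 u v (u * v)
    rw [hβ.2.2 (u * v), hβ.2.1 u u v, hβ.2.1 v u v, hβ.2.2 u, hβ.2.2 v,
      one_mul, mul_one] at e1
    exact e1.symm
  rcases aux_pm β hβ u v with h1 | h1 <;> rcases aux_pm β hβ v u with h2 | h2 <;>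
      rw [h1, h2] at h ⊢
  · exact absurd (congrArg Units.val h) (by norm_num)
  · exact absurd (congrArg Units.val h) (by norm_num)

end Aux

/-- Let `β` be an alternating bicharacter of type II on a finite abelian group `T`,
with radical `{1, f}` where `f` has order 2.  Then `[u] ↦ u^⊥ = {v ∣ β(u,v) = 1}` is a
well-defined bijection from `T/⟨f⟩` onto the set of all subgroups `S` of `T` with
`f ∈ S` and `[T : S] ≤ 2`. -/
theorem stmt2 {T : Type*} [CommGroup T] [Fintype T]
    (β : T → T → ℝˣ) (hβ : IsAltBichar β)
    (f : T) (hf : orderOf f = 2)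
    (hII : ∀ t : T, (∀ u : T, β u t = 1) ↔ (t = 1 ∨ t = f)) :
    ∃ F : T ⧸ Subgroup.zpowers f → Subgroup T,
      (∀ u : T, (F (QuotientGroup.mk u) : Set T) = {v : T | β u v = 1}) ∧
      Function.Injective F ∧
      Set.range F = {S : Subgroup T | f ∈ S ∧ S.index ≤ 2} := by
  classical
  have hf1 : f ≠ 1 := by
    intro h
    rw [h, orderOf_one] at hf
    norm_num at hf
  -- f is in the radical
  have hfR : ∀ u : T, β u f = 1 := (hII f).mpr (Or.inr rfl)
  have hfL : ∀ v : T, β f v = 1 := fun v => (aux_symm β hβ f v).trans (hfR v)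
  -- every element of ⟨f⟩ is in the radical
  have hzp : ∀ t ∈ Subgroup.zpowers f, ∀ v : T, β t v = 1 := by
    rintro t ⟨k, rfl⟩ v
    have : (auxLhom β hβ v) (f ^ k) = 1 := by
      rw [map_zpow]
      have : (auxLhom β hβ v) f = 1 := hfL v
      rw [this, one_zpow]
    exact this
  -- the orthogonal-complement subgroups
  set perp : T → Subgroup T := fun u => (auxRhom β hβ u).ker with hperp
  have hmem : ∀ u v : T, v ∈ perp u ↔ β u v = 1 := fun u v => Iff.rfl
  -- perp is constant on cosets of ⟨f⟩
  have hresp : ∀ a b : T,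
      (QuotientGroup.leftRel (Subgroup.zpowers f)).r a b → perp a = perp b := by
    intro a b hab
    replace hab := QuotientGroup.leftRel_apply.mp hab
    have hb : b = a * (a⁻¹ * b) := by group
    ext v
    rw [hmem, hmem, hb, hβ.1, hzp _ hab v, mul_one]
  refine ⟨fun q => Quotient.liftOn' q perp hresp, ?_, ?_, ?_⟩
  · intro u
    ext v
    exact hmem u v
  · -- injectivity
    intro q1 q2
    refine Quotient.inductionOn₂' q1 q2 ?_
    intro a b hab
    have heq : ∀ w : T, β a w = β b w := by
      intro w
      have hiff : β a w = 1 ↔ β b w = 1 := by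
        have h1 : (w ∈ perp a ↔ w ∈ perp b) := by
          constructor <;> intro hw
          · exact (congrArg (fun (s : Subgroup T) => w ∈ s) hab).mp hw
          · exact (congrArg (fun (s : Subgroup T) => w ∈ s) hab).mpr hw
        rwa [hmem, hmem] at h1
      rcases aux_pm β hβ a w with h1 | h1 <;> rcases aux_pm β hβ b w with h2 | h2 <;>
        simp_all
    have hrad : ∀ w : T, β w (a⁻¹ * b) = 1 := by
      intro w
      have hinv : β w a⁻¹ = (β w a)⁻¹ := map_inv (auxRhom β hβ w) a
      have hwab : β w a = β w b := by
        rw [← aux_symm β hβ a w, heq w, aux_symm β hβ b w]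
      rw [hβ.2.1, hinv, hwab]
      group
    have hor := (hII (a⁻¹ * b)).mp hrad
    show QuotientGroup.mk a = QuotientGroup.mk b
    rw [QuotientGroup.eq]
    rcases hor with h | h
    · exact h ▸ Subgroup.one_mem _
    · exact h ▸ Subgroup.mem_zpowers f
  · -- range
    have hidx : ∀ u : T, (perp u).index ≤ 2 := by
      intro u
      rw [hperp]
      rw [Subgroup.index_ker]
      have hsub : (Set.range (auxRhom β hβ u)) ⊆ ({1, -1} : Set ℝˣ) := by
        rintro x ⟨v, rfl⟩
        simp only [Set.mem_insert_iff, Set.mem_singleton_iff]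
        exact aux_pm β hβ u v
      have hfin : ({1, -1} : Set ℝˣ).Finite := (Set.finite_singleton (-1)).insert 1
      calc Nat.card (auxRhom β hβ u).range = Nat.card (Set.range (auxRhom β hβ u)) := rfl
        _ ≤ Nat.card ({1, -1} : Set ℝˣ) := Nat.card_mono hfin hsub
        _ = 2 := by
            rw [Nat.card_coe_set_eq, Set.ncard_pair]
            intro h
            have := congrArg Units.val h
            norm_num at this
    have hFperp : ∀ u : T, Quotient.liftOn' (QuotientGroup.mk (s := Subgroup.zpowers f) u)
        perp hresp = perp u := fun u => rfl
    ext S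
    simp only [Set.mem_range, Set.mem_setOf_eq]
    constructor
    · rintro ⟨q, rfl⟩
      refine Quotient.inductionOn' q ?_
      intro u
      exact ⟨hfR u, hidx u⟩
    · rintro ⟨hfS, hS2⟩
      have hS0 : S.index ≠ 0 := Subgroup.index_ne_zero_of_finite
      interval_cases h : S.index
      · exact absurd rfl hS0
      · -- index 1 : S = ⊤
        have hStop : S = ⊤ := Subgroup.index_eq_one.mp h
        refine ⟨QuotientGroup.mk 1, ?_⟩
        rw [hFperp, hStop]
        ext v
        rw [hmem]
        have h1 : (auxLhom β hβ v) 1 = 1 := map_one _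
        simp only [Subgroup.mem_top, iff_true]
        exact h1
      · -- index 2 : counting argument
        have hcardT : Fintype.card T = 2 * Fintype.card S := by
          have hh := S.index_mul_card
          rw [h, Nat.card_eq_fintype_card, Nat.card_eq_fintype_card] at hh
          omega
        set K : Finset T := Finset.univ.filter (fun u => ∀ v ∈ S, β u v = 1) with hK
        -- inner sum over S
        have hinner : ∀ u : T, ∑ v : S, ((β u v : ℝ)) =
            if u ∈ K then (Fintype.card S : ℝ) else 0 := by
          intro u
          by_cases hu : u ∈ K
          · rw [if_pos hu]
            rw [hK, Finset.mem_filter] at hu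
            rw [Finset.sum_congr rfl (fun v _ => by rw [hu.2 v v.2, Units.val_one]),
              Finset.sum_const, Finset.card_univ, nsmul_eq_mul, mul_one]
          · rw [if_neg hu]
            rw [hK, Finset.mem_filter] at hu
            push_neg at hu
            obtain ⟨v, hvS, hv⟩ := hu (Finset.mem_univ u)
            exact aux_char_sum ((auxRhom β hβ u).comp S.subtype) ⟨⟨v, hvS⟩, hv⟩
        -- outer sum over T
        have houter : ∀ v : S, ∑ u : T, ((β u v : ℝ)) =
            if ((v : T) = 1 ∨ (v : T) = f) then (Fintype.card T : ℝ) else 0 := by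
          intro v
          by_cases hv : (v : T) = 1 ∨ (v : T) = f
          · rw [if_pos hv]
            have hall := (hII (v : T)).mpr hv
            rw [Finset.sum_congr rfl (fun u _ => by rw [hall u, Units.val_one]),
              Finset.sum_const, Finset.card_univ, nsmul_eq_mul, mul_one]
          · rw [if_neg hv]
            have hnot : ¬ (∀ u : T, β u (v : T) = 1) := fun hall => hv ((hII _).mp hall)
            push_neg at hnot
            obtain ⟨u, hu⟩ := hnot
            exact aux_char_sum (auxLhom β hβ (v : T)) ⟨u, hu⟩
        -- double counting
        have hswap : ∑ u : T, ∑ v : S, ((β u v : ℝ)) = ∑ v : S, ∑ u : T, ((β u v : ℝ)) :=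
          Finset.sum_comm
        have hLHS : ∑ u : T, ∑ v : S, ((β u v : ℝ)) = (K.card : ℝ) * (Fintype.card S : ℝ) := by
          rw [Finset.sum_congr rfl (fun u _ => hinner u), ← Finset.sum_filter]
          have hfil : Finset.univ.filter (· ∈ K) = K := by
            ext u; simp
          rw [hfil, Finset.sum_const, nsmul_eq_mul]
        have hRHS : ∑ v : S, ∑ u : T, ((β u v : ℝ)) = 2 * (Fintype.card T : ℝ) := by
          rw [Finset.sum_congr rfl (fun v _ => houter v), ← Finset.sum_filter]
          have hfilter : Finset.univ.filter (fun v : S => (v : T) = 1 ∨ (v : T) = f) =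
              ({⟨1, S.one_mem⟩, ⟨f, hfS⟩} : Finset S) := by
            ext v
            simp only [Finset.mem_filter, Finset.mem_univ, true_and, Finset.mem_insert,
              Finset.mem_singleton, Subtype.ext_iff]
          rw [hfilter, Finset.sum_insert (by
            simp only [Finset.mem_singleton, Subtype.mk.injEq]
            exact Ne.symm hf1), Finset.sum_singleton]
          ring
        have hKcard : K.card = 4 := by
          have hSpos : (0 : ℝ) < (Fintype.card S : ℝ) := by
            exact_mod_cast Fintype.card_pos
          have heq4 : (K.card : ℝ) * (Fintype.card S : ℝ) = 4 * (Fintype.card S : ℝ) := by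
            rw [← hLHS, hswap, hRHS, hcardT]
            push_cast
            ring
          have heq4' : (K.card : ℝ) = 4 := mul_right_cancel₀ (ne_of_gt hSpos) heq4
          exact_mod_cast heq4'
        -- find u in K outside {1, f}
        have hex : ∃ u ∈ K, u ≠ 1 ∧ u ≠ f := by
          by_contra hcon
          push_neg at hcon
          have hsub : K ⊆ ({1, f} : Finset T) := by
            intro u hu
            by_cases h1 : u = 1
            · simp [h1]
            · simp [hcon u hu h1]
          have hle4 := Finset.card_le_card hsub
          rw [hKcard] at hle4
          have hle2 : ({1, f} : Finset T).card ≤ 2 :=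
            (Finset.card_insert_le _ _).trans (by simp)
          omega
        obtain ⟨u, huK, hu1, huf⟩ := hex
        rw [hK, Finset.mem_filter] at huK
        have huS : ∀ v ∈ S, β u v = 1 := huK.2
        -- S ≤ perp u
        have hle : S ≤ perp u := fun v hv => (hmem u v).mpr (huS v hv)
        -- perp u ≠ ⊤
        have hne : perp u ≠ ⊤ := by
          intro htop
          have hall : ∀ w : T, β w u = 1 := by
            intro w
            rw [← aux_symm β hβ u w]
            exact (hmem u w).mp (by rw [htop]; exact Subgroup.mem_top w)
          rcases (hII u).mp hall with h' | h'
          · exact hu1 h'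
          · exact huf h'
        have hpidx : (perp u).index = 2 := by
          have h2 := hidx u
          have h0 : (perp u).index ≠ 0 := Subgroup.index_ne_zero_of_finite
          have h1 : (perp u).index ≠ 1 := fun hh => hne (Subgroup.index_eq_one.mp hh)
          omega
        -- S = perp u
        have hrel := Subgroup.relIndex_mul_index hle
        rw [hpidx, h] at hrel
        have hrel1 : S.relIndex (perp u) = 1 := by omega
        have hge : perp u ≤ S := Subgroup.relIndex_eq_one.mp hrel1
        exact ⟨QuotientGroup.mk u, by rw [hFperp]; exact le_antisymm hge hle⟩
end

section
/- Let T be a finite abelian group, K a subgroup of T of index 2, and ν : T ∖ K → {±1} a map; for g ∈ T ∖ K let μ_g : K → {±1} be given by μ_g(k) := ν(gk)ν(g)⁻¹. If μ_g is a quadratic form on K for some g ∈ T ∖ K, then μ_h is a quadratic form on K for every h ∈ T ∖ K, all these quadratic forms have the same polarization β (indeed μ_h(k) = μ_g(k)·β(g⁻¹h, k) for all k ∈ K), and, if β has type II, the value μ_g(f_β) does not depend on the choice of g ∈ T ∖ K. -/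
/-- The polarization of a map `μ : T → ℝˣ`. -/
def polar {T : Type*} [CommGroup T] (μ : T → ℝˣ) : T → T → ℝˣ :=
  fun u v => μ (u * v) * (μ u)⁻¹ * (μ v)⁻¹

/-- A quadratic form on `T`: a map with values in `{±1}` whose polarization is an
alternating bicharacter. -/
def IsQuadForm {T : Type*} [CommGroup T] (μ : T → ℝˣ) : Prop :=
  (∀ t : T, μ t = 1 ∨ μ t = -1) ∧ IsAltBichar (polar μ)

/-- Given a subgroup `K ≤ T` of index 2, a map `ν : T ∖ K → {±1}` and, for
`g ∈ T ∖ K`, the map `μ_g : K → {±1}`, `μ_g(k) = ν(gk)ν(g)⁻¹`:  if `μ_g` is a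
quadratic form for some `g ∈ T ∖ K`, then so is `μ_h` for every `h ∈ T ∖ K`, with
`μ_h(k) = μ_g(k)·β(g⁻¹h,k)`, all these quadratic forms have the same polarization `β`,
and if `β` has type II then `μ_g(f_β)` does not depend on `g ∈ T ∖ K`. -/
theorem stmt5 {T : Type*} [CommGroup T] [Fintype T]
    (K : Subgroup T) (hK : K.index = 2)
    (ν : T → ℝˣ) (hν : ∀ t : T, t ∉ K → ν t = 1 ∨ ν t = -1)
    (g : T) (hg : g ∉ K)
    (hqf : IsQuadForm (fun k : K => ν (g * (k : T)) * (ν g)⁻¹)) :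
    (∀ h : T, h ∉ K → IsQuadForm (fun k : K => ν (h * (k : T)) * (ν h)⁻¹)) ∧
    (∀ h : T, h ∉ K → ∀ k : K, ∀ hgh : g⁻¹ * h ∈ K,
      ν (h * (k : T)) * (ν h)⁻¹ =
        ν (g * (k : T)) * (ν g)⁻¹ *
          polar (fun k : K => ν (g * (k : T)) * (ν g)⁻¹) ⟨g⁻¹ * h, hgh⟩ k) ∧
    (∀ h : T, h ∉ K →
      polar (fun k : K => ν (h * (k : T)) * (ν h)⁻¹) =
        polar (fun k : K => ν (g * (k : T)) * (ν g)⁻¹)) ∧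
    (∀ fb : K, orderOf fb = 2 →
      (∀ t : K, (∀ u : K, polar (fun k : K => ν (g * (k : T)) * (ν g)⁻¹) u t = 1) ↔
        (t = 1 ∨ t = fb)) →
      ∀ h : T, h ∉ K →
        ν (h * (fb : T)) * (ν h)⁻¹ = ν (g * (fb : T)) * (ν g)⁻¹) := by
  set μ : K → ℝˣ := fun k : K => ν (g * (k : T)) * (ν g)⁻¹ with hμ
  have hmem : ∀ h : T, h ∉ K → g⁻¹ * h ∈ K := by
    intro h hh
    rw [Subgroup.mul_mem_iff_of_index_two hK]
    simp [hg, hh]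
  have hnot : ∀ (h : T) (k : K), h ∉ K → h * (k : T) ∉ K := by
    intro h k hh mem
    have : h = h * (k : T) * ((k : T))⁻¹ := by group
    exact hh (this ▸ mul_mem mem (inv_mem k.2))
  -- key identity
  have key : ∀ (h : T) (hh : h ∉ K) (k : K),
      ν (h * (k : T)) * (ν h)⁻¹ = μ k * polar μ ⟨g⁻¹ * h, hmem h hh⟩ k := by
    intro h hh k
    set m : K := ⟨g⁻¹ * h, hmem h hh⟩ with hm
    have h1 : h * (k : T) = g * ((m * k : K) : T) := by
      simp only [Subgroup.coe_mul, hm]; group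
    have h2 : h = g * ((m : K) : T) := by simp only [hm]; group
    rw [h1, h2]
    simp only [polar, hμ]
    rw [Units.ext_iff]
    simp only [Units.val_mul, Units.val_inv_eq_inv_val]
    field_simp
  -- polarization equality
  have hpol : ∀ (h : T), h ∉ K →
      polar (fun k : K => ν (h * (k : T)) * (ν h)⁻¹) = polar μ := by
    intro h hh
    obtain ⟨_, _, hb2, _⟩ := hqf
    funext u v
    show (fun k : K => ν (h * (k : T)) * (ν h)⁻¹) (u * v) *
        ((fun k : K => ν (h * (k : T)) * (ν h)⁻¹) u)⁻¹ *
        ((fun k : K => ν (h * (k : T)) * (ν h)⁻¹) v)⁻¹ = polar μ u v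
    simp only
    rw [key h hh, key h hh u, key h hh v, hb2 ⟨g⁻¹ * h, hmem h hh⟩ u v]
    conv_rhs => rw [polar]
    rw [Units.ext_iff]
    simp only [Units.val_mul, Units.val_inv_eq_inv_val]
    field_simp
  refine ⟨?_, ?_, hpol, ?_⟩
  · intro h hh
    refine ⟨?_, hpol h hh ▸ hqf.2⟩
    intro k
    rcases hν _ (hnot h k hh) with h1 | h1 <;> rcases hν h hh with h2 | h2 <;>
      simp [h1, h2]
  · intro h hh k hgh
    exact key h hh k
  · intro fb hfb hrad h hh
    have hr : ∀ u : K, polar μ u fb = 1 := (hrad fb).mpr (Or.inr rfl)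
    rw [key h hh fb, hr]
    simp [hμ]
end

section
/- Let T be a finite abelian group with T ≅ ℤ₂^{2m−2} × ℤ₄, let K be a subgroup of index 2 with K ≅ ℤ₂^{2m−3} × ℤ₄, and let ν : T ∖ K → {±1} be a nice map (i.e., the maps μ_g(k) := ν(gk)ν(g)⁻¹ on K are quadratic forms), whose common polarization β has type II. Then for any two elements g, h ∈ T ∖ K of order 2 and any a ∈ rad′(β), one has μ_g(a) = μ_h(a). -/
/-- Let `T ≅ ℤ₂^{2m-2} × ℤ₄`, `K ≤ T` of index 2 with `K ≅ ℤ₂^{2m-3} × ℤ₄`, and let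
`ν : T ∖ K → {±1}` be a nice map whose common polarization `β` has type II (radical
`{1, f_β}`).  Then for any two elements `g, h ∈ T ∖ K` of order 2 and any
`a ∈ rad′(β) = rad(β|_{K_{[2]}×K_{[2]}}) ∖ rad(β)`, one has `μ_g(a) = μ_h(a)`. -/
theorem stmt6 {T : Type*} [CommGroup T] [Fintype T] (m : ℕ) (hm : 2 ≤ m)
    (hT : Nonempty (T ≃* Multiplicative ((Fin (2 * m - 2) → ZMod 2) × ZMod 4)))
    (K : Subgroup T) (hK : K.index = 2)
    (hKiso : Nonempty (K ≃* Multiplicative ((Fin (2 * m - 3) → ZMod 2) × ZMod 4)))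
    (ν : T → ℝˣ) (hν : ∀ t : T, t ∉ K → ν t = 1 ∨ ν t = -1)
    (β : K → K → ℝˣ)
    (hnice : ∀ g : T, g ∉ K → IsQuadForm (fun k : K => ν (g * (k : T)) * (ν g)⁻¹) ∧
      polar (fun k : K => ν (g * (k : T)) * (ν g)⁻¹) = β)
    (fb : K) (hfb : orderOf fb = 2)
    (hII : ∀ t : K, (∀ u : K, β u t = 1) ↔ (t = 1 ∨ t = fb)) :
    ∀ g h : T, g ∉ K → h ∉ K → orderOf g = 2 → orderOf h = 2 →
      ∀ a : K, a ^ 2 = 1 → (∀ u : K, u ^ 2 = 1 → β u a = 1) → ¬(∀ u : K, β u a = 1) →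
        ν (g * (a : T)) * (ν g)⁻¹ = ν (h * (a : T)) * (ν h)⁻¹ := by
  intro g h hg hh hog hoh a ha2 hrad _
  have hk : g⁻¹ * h ∈ K := by
    rw [Subgroup.mul_mem_iff_of_index_two hK]
    simp [hg, hh]
  set k : K := ⟨g⁻¹ * h, hk⟩ with hkdef
  have hgk : h = g * (k : T) := by simp [hkdef]
  have hg2 : g ^ 2 = 1 := by rw [← hog]; exact pow_orderOf_eq_one g
  have hh2 : h ^ 2 = 1 := by rw [← hoh]; exact pow_orderOf_eq_one h
  have hk2 : k ^ 2 = 1 := by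
    have : (g⁻¹ * h) ^ 2 = 1 := by
      rw [mul_pow, inv_pow, hg2, hh2]; simp
    ext
    simpa [hkdef] using this
  have hb1 : β k a = 1 := hrad k hk2
  have hβ := (hnice g hg).2
  have hpol : polar (fun k : K => ν (g * (k : T)) * (ν g)⁻¹) k a = 1 := by
    rw [hβ]; exact hb1
  have hmul : ((k * a : K) : T) = (k : T) * (a : T) := rfl
  unfold polar at hpol
  simp only [hmul] at hpol
  rw [hgk]
  have h1 : g * ((k : T) * (a : T)) = g * (k : T) * (a : T) := by group
  rw [h1] at hpol
  have goal' : ν (g * (a:T)) * (ν g)⁻¹ = ν (g * (k:T) * (a:T)) * (ν (g * (k:T)))⁻¹ := by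
    have hv := congrArg Units.val hpol
    apply Units.ext
    simp only [Units.val_mul, Units.val_inv_eq_inv_val, Units.val_one, mul_inv_rev,
      inv_inv] at hv ⊢
    field_simp at hv ⊢
    linarith [hv]
  rw [goal']
end

section
/- Let T be a finite abelian group isomorphic to ℤ₂^{2m−1} × ℤ₄, with f_T the generator of the order-2 subgroup T^{[2]}, and let η be a quadratic form on T whose polarization β_η has type II. Then η(f_T) = +1, and η takes the same value on the two elements of rad′(β_η). -/
/-- Let `T ≅ ℤ₂^{2m-1} × ℤ₄` with `f` the generator of the order-2 subgroup
`T^{[2]} = {t² ∣ t ∈ T}` and let `η` be a quadratic form on `T` whose polarization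
has type II (radical `{1, f_β}` with `f_β` of order 2).  Then `η(f) = +1` and `η`
takes the same value on the two elements of
`rad′(β_η) = rad(β_η|_{T_{[2]}×T_{[2]}}) ∖ rad(β_η)`. -/
theorem stmt7 {T : Type*} [CommGroup T] [Fintype T] (m : ℕ) (hm : 1 ≤ m)
    (hT : Nonempty (T ≃* Multiplicative ((Fin (2 * m - 1) → ZMod 2) × ZMod 4)))
    (f : T) (hf1 : f ≠ 1) (hsq : ∀ t : T, t ^ 2 = 1 ∨ t ^ 2 = f) (hex : ∃ t : T, t ^ 2 = f)
    (η : T → ℝˣ) (hη : IsQuadForm η)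
    (fb : T) (hfb : orderOf fb = 2)
    (hII : ∀ t : T, (∀ u : T, polar η u t = 1) ↔ (t = 1 ∨ t = fb)) :
    η f = 1 ∧
    (∀ a a' : T,
      (a ^ 2 = 1 ∧ (∀ u : T, u ^ 2 = 1 → polar η u a = 1) ∧ ¬(∀ u : T, polar η u a = 1)) →
      (a' ^ 2 = 1 ∧ (∀ u : T, u ^ 2 = 1 → polar η u a' = 1) ∧ ¬(∀ u : T, polar η u a' = 1)) →
      η a = η a') := by
  obtain ⟨hpm, hadd1, hadd2, halt⟩ := hη
  have βpm : ∀ u v : T, polar η u v = 1 ∨ polar η u v = -1 := by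
    intro u v
    rcases hpm (u * v) with h1 | h1 <;> rcases hpm u with h2 | h2 <;>
      rcases hpm v with h3 | h3 <;> simp [polar, h1, h2, h3]
  have βsq : ∀ u v : T, polar η u (v * v) = 1 := by
    intro u v
    rw [hadd2]
    rcases βpm u v with h | h <;> simp [h]
  obtain ⟨t, ht⟩ := hex
  have hradf : ∀ u : T, polar η u f = 1 := by
    intro u
    rw [← ht, pow_two]
    exact βsq u t
  have hfbf : f = fb := by
    rcases (hII f).1 hradf with h | h
    · exact absurd h hf1
    · exact h
  have ηf : η f = 1 := by
    have h2 : η (t * t) * (η t)⁻¹ * (η t)⁻¹ = 1 := halt t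
    rw [← ht, pow_two]
    rcases hpm t with h3 | h3 <;> rw [h3] at h2 <;> simpa using h2
  have ηmulf : ∀ a : T, η (a * f) = η a := by
    intro a
    have h : η (a * f) * (η a)⁻¹ * (η f)⁻¹ = 1 := hradf a
    rw [ηf, inv_one, mul_one] at h
    exact mul_inv_eq_one.mp h
  refine ⟨ηf, ?_⟩
  rintro a a' ⟨ha2, haT2, hanot⟩ ⟨ha2', haT2', hanot'⟩
  have key : ∀ b : T, (∀ u : T, u ^ 2 = 1 → polar η u b = 1) →
      (¬ ∀ u : T, polar η u b = 1) → ∀ u : T, u ^ 2 = f → polar η u b = -1 := by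
    intro b hbT hbnot u hu
    rcases βpm u b with h | h
    · exfalso
      apply hbnot
      intro v
      rcases hsq v with hv | hv
      · exact hbT v hv
      · have hvu : (v * u⁻¹) ^ 2 = 1 := by
          rw [mul_pow, inv_pow, hv, hu, mul_inv_cancel]
        have h1 := hbT _ hvu
        have hdecomp : polar η v b = polar η (v * u⁻¹) b * polar η u b := by
          conv_lhs => rw [← inv_mul_cancel_right v u]
          exact hadd1 _ _ _
        rw [hdecomp, h1, h, one_mul]
    · exact h
  have hprod : ∀ u : T, polar η u (a * a') = 1 := by
    intro u
    rw [hadd2]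
    rcases hsq u with hu | hu
    · rw [haT2 u hu, haT2' u hu, one_mul]
    · rw [key a haT2 hanot u hu, key a' haT2' hanot' u hu]
      simp
  have haa : a' = a * (a * a') := by
    calc a' = (a * a) * a' := by rw [← pow_two, ha2, one_mul]
    _ = a * (a * a') := by group
  rcases (hII (a * a')).1 hprod with h | h
  · rw [h, mul_one] at haa
    rw [haa]
  · rw [← hfbf] at h
    rw [h] at haa
    rw [haa, ηmulf]
end

section
/- Let T be a finite abelian group isomorphic to ℤ₂^{2m−1} × ℤ₄, with f_T the generator of the order-2 subgroup T^{[2]}. Let β be an alternating bicharacter of type II on T, and let μ be a quadratic form defined on the subgroup T_{[2]} such that β_μ = β|_{T_{[2]}×T_{[2]}} and μ(f_T) = +1. Then there exist exactly two quadratic forms on T that extend μ and whose polarization is β. -/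
lemma unit_pm {x : ℝˣ} (h : x * x = 1) : x = 1 ∨ x = -1 := by
  have h' : (x : ℝ) * (x : ℝ) = 1 := by
    have := congrArg Units.val h; push_cast at this; exact this
  rcases mul_self_eq_one_iff.mp h' with h'' | h''
  · left; ext; simpa using h''
  · right; ext; simpa using h''

lemma unit_one_ne_neg_one : (1 : ℝˣ) ≠ -1 := by
  intro h
  have := congrArg Units.val h
  push_cast at this
  norm_num at this

/-- Let `T ≅ ℤ₂^{2m-1} × ℤ₄` with `f` the generator of the order-2 subgroup
`T^{[2]}`, let `β` be an alternating bicharacter of type II on `T`, and let `μ` be a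
quadratic form on the subgroup `T_{[2]} = {t ∣ t² = 1}` such that `β_μ` is the
restriction of `β` and `μ(f) = +1`.  Then there are exactly two quadratic forms on `T`
extending `μ` whose polarization is `β`. -/
theorem stmt8 {T : Type*} [CommGroup T] [Fintype T] (m : ℕ) (hm : 1 ≤ m)
    (hT : Nonempty (T ≃* Multiplicative ((Fin (2 * m - 1) → ZMod 2) × ZMod 4)))
    (f : T) (hf1 : f ≠ 1) (hsq : ∀ t : T, t ^ 2 = 1 ∨ t ^ 2 = f) (hex : ∃ t : T, t ^ 2 = f)
    (β : T → T → ℝˣ) (hβ : IsAltBichar β)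
    (fb : T) (hfb : orderOf fb = 2)
    (hII : ∀ t : T, (∀ u : T, β u t = 1) ↔ (t = 1 ∨ t = fb))
    (K : Subgroup T) (hKdef : ∀ t : T, t ∈ K ↔ t ^ 2 = 1)
    (μ : K → ℝˣ) (hμ : IsQuadForm μ)
    (hpol : ∀ u v : K, polar μ u v = β (u : T) (v : T))
    (hfK : f ∈ K) (hμf : μ ⟨f, hfK⟩ = 1) :
    ∃ η₁ η₂ : T → ℝˣ,
      η₁ ≠ η₂ ∧
      (IsQuadForm η₁ ∧ polar η₁ = β ∧ ∀ k : K, η₁ (k : T) = μ k) ∧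
      (IsQuadForm η₂ ∧ polar η₂ = β ∧ ∀ k : K, η₂ (k : T) = μ k) ∧
      (∀ η : T → ℝˣ,
        (IsQuadForm η ∧ polar η = β ∧ ∀ k : K, η (k : T) = μ k) → η = η₁ ∨ η = η₂) := by
  classical
  have hβ1 := hβ.1
  have hβ2 := hβ.2.1
  have hβ3 := hβ.2.2
  have hμpm := hμ.1
  obtain ⟨g, hg⟩ := hex
  have hf2 : f ^ 2 = 1 := (hKdef f).mp hfK
  have hgK : g ∉ K := by
    intro h
    exact hf1 (hg ▸ (hKdef g).mp h)
  have βu1 : ∀ u : T, β u 1 = 1 := by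
    intro u
    have h := hβ2 u 1 1
    rw [mul_one] at h
    exact (left_eq_mul.mp h)
  have βgg1 : ∀ u : T, β u g * β u g = 1 := by
    intro u
    have h4 : (β u g * β u g) * (β u g * β u g) = 1 := by
      rw [← hβ2 u g g, ← hβ2 u (g * g) (g * g)]
      rw [show (g * g : T) = f from by rw [← sq, hg]]
      rw [show (f * f : T) = 1 from by rw [← sq, hf2]]
      exact βu1 u
    rcases unit_pm h4 with h | h
    · exact h
    · exfalso
      have := congrArg Units.val h
      push_cast at this
      nlinarith [mul_self_nonneg ((β u g : ℝ))]
  have βuf : ∀ u : T, β u f = 1 := by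
    intro u
    rw [← hg, sq, hβ2]
    exact βgg1 u
  have βsq : ∀ u v : T, β u v * β u v = 1 := by
    intro u v
    rw [← hβ2]
    rcases hsq v with h | h
    · rw [← sq, h]; exact βu1 u
    · rw [← sq, h]; exact βuf u
  have βsymm : ∀ u v : T, β u v = β v u := by
    intro u v
    have h := hβ3 (u * v)
    rw [hβ1, hβ2, hβ2, hβ3, hβ3, one_mul, mul_one] at h
    have h2 := eq_inv_of_mul_eq_one_right h
    rw [h2]
    exact (inv_eq_of_mul_eq_one_right (βsq u v)).symm
  have μmul : ∀ a b : K, μ (a * b) = β (a : T) (b : T) * μ a * μ b := by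
    intro a b
    have h := hpol a b
    simp only [polar] at h
    rw [← h]
    simp [mul_comm, mul_left_comm, mul_assoc]
  have μ1 : μ 1 = 1 := by
    have h := hpol 1 1
    simp only [polar, mul_one, OneMemClass.coe_one] at h
    rw [βu1] at h
    have h2 : μ 1 * (μ 1)⁻¹ * (μ 1)⁻¹ = (μ 1)⁻¹ := by
      simp [mul_comm, mul_left_comm, mul_assoc]
    rw [h2] at h
    exact inv_eq_one.mp h
  have μshift : ∀ k : K, μ (⟨f, hfK⟩ * k) = μ k := by
    intro k
    rw [μmul]
    rw [show ((⟨f, hfK⟩ : K) : T) = f from rfl, hμf, mul_one]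
    rw [βsymm, βuf, one_mul]
  have hnK : ∀ t : T, t ∉ K → t ^ 2 = f := fun t h =>
    (hsq t).resolve_left (fun h1 => h ((hKdef t).mpr h1))
  have hmem : ∀ t : T, t ∉ K → g⁻¹ * t ∈ K := by
    intro t h
    rw [hKdef, mul_pow, inv_pow, hg, hnK t h, inv_mul_cancel]
  have hKmul1 : ∀ u v : T, u ∈ K → v ∉ K → u * v ∉ K := by
    intro u v hu hv h
    have h2 : u⁻¹ * (u * v) ∈ K := mul_mem (inv_mem hu) h
    rw [inv_mul_cancel_left] at h2
    exact hv h2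
  have hKmul3 : ∀ u v : T, u ∉ K → v ∉ K → u * v ∈ K := by
    intro u v hu hv
    rw [hKdef, mul_pow, hnK u hu, hnK v hv, ← sq, hf2]
  -- the two candidate extensions
  let E : ℝˣ → T → ℝˣ := fun c t =>
    if h : t ∈ K then μ ⟨t, h⟩ else c * μ ⟨g⁻¹ * t, hmem t h⟩ * β g (g⁻¹ * t)
  have EK : ∀ (c : ℝˣ) (k : K), E c (k : T) = μ k := by
    intro c k
    simp only [E]
    rw [dif_pos k.2]
  have key2 : ∀ (c : ℝˣ) (u v : T), u ∈ K → v ∉ K →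
      E c (u * v) = β u v * E c u * E c v := by
    intro c u v hu hv
    have huv : u * v ∉ K := hKmul1 u v hu hv
    simp only [E]
    rw [dif_pos hu, dif_neg hv, dif_neg huv]
    have e1 : (⟨g⁻¹ * (u * v), hmem _ huv⟩ : K) = ⟨u, hu⟩ * ⟨g⁻¹ * v, hmem _ hv⟩ := by
      ext
      show g⁻¹ * (u * v) = u * (g⁻¹ * v)
      simp [mul_comm, mul_left_comm, mul_assoc]
    rw [e1, μmul]
    rw [show ((⟨u, hu⟩ : K) : T) = u from rfl,
      show ((⟨g⁻¹ * v, hmem _ hv⟩ : K) : T) = g⁻¹ * v from rfl]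
    have e2 : g⁻¹ * (u * v) = u * (g⁻¹ * v) := by
      simp [mul_comm, mul_left_comm, mul_assoc]
    rw [e2, hβ2 g u (g⁻¹ * v)]
    have e3 : β u v = β u g * β u (g⁻¹ * v) := by
      rw [← hβ2, mul_inv_cancel_left]
    rw [e3, βsymm g u]
    apply Units.ext
    push_cast
    ring
  have Ekey : ∀ c : ℝˣ, c * c = 1 → ∀ u v : T,
      E c (u * v) = β u v * E c u * E c v := by
    intro c hc u v
    by_cases hu : u ∈ K <;> by_cases hv : v ∈ K
    · have huv : u * v ∈ K := mul_mem hu hv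
      simp only [E]
      rw [dif_pos hu, dif_pos hv, dif_pos huv]
      rw [show (⟨u * v, huv⟩ : K) = ⟨u, hu⟩ * ⟨v, hv⟩ from rfl, μmul]
    · exact key2 c u v hu hv
    · have h := key2 c v u hv hu
      rw [mul_comm v u, βsymm v u] at h
      rw [h, mul_right_comm]
    · have huv : u * v ∈ K := hKmul3 u v hu hv
      simp only [E]
      rw [dif_neg hu, dif_neg hv, dif_pos huv]
      have e1 : (⟨u * v, huv⟩ : K) =
          ⟨f, hfK⟩ * (⟨g⁻¹ * u, hmem u hu⟩ * ⟨g⁻¹ * v, hmem v hv⟩) := by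
        ext
        show u * v = f * (g⁻¹ * u * (g⁻¹ * v))
        rw [← hg]
        simp [sq, mul_comm, mul_left_comm, mul_assoc]
      rw [e1, μshift, μmul]
      rw [show ((⟨g⁻¹ * u, hmem u hu⟩ : K) : T) = g⁻¹ * u from rfl,
        show ((⟨g⁻¹ * v, hmem v hv⟩ : K) : T) = g⁻¹ * v from rfl]
      have e2 : β u v = β g (g⁻¹ * v) * (β g (g⁻¹ * u) * β (g⁻¹ * u) (g⁻¹ * v)) := by
        have h0 : β u v = β (g * (g⁻¹ * u)) (g * (g⁻¹ * v)) := by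
          rw [mul_inv_cancel_left, mul_inv_cancel_left]
        rw [h0, hβ1, hβ2 g g (g⁻¹ * v), hβ2 (g⁻¹ * u) g (g⁻¹ * v), hβ3, one_mul,
          βsymm (g⁻¹ * u) g]
      rw [e2]
      symm
      calc β g (g⁻¹ * v) * (β g (g⁻¹ * u) * β (g⁻¹ * u) (g⁻¹ * v)) *
            (c * μ ⟨g⁻¹ * u, hmem u hu⟩ * β g (g⁻¹ * u)) *
            (c * μ ⟨g⁻¹ * v, hmem v hv⟩ * β g (g⁻¹ * v))
          = β (g⁻¹ * u) (g⁻¹ * v) * μ ⟨g⁻¹ * u, hmem u hu⟩ * μ ⟨g⁻¹ * v, hmem v hv⟩ *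
            ((β g (g⁻¹ * u) * β g (g⁻¹ * u)) * ((β g (g⁻¹ * v) * β g (g⁻¹ * v)) * (c * c))) := by
            apply Units.ext; push_cast; ring
        _ = _ := by rw [βsq, βsq, hc]; simp
  have Epol : ∀ c : ℝˣ, c * c = 1 → polar (E c) = β := by
    intro c hc
    funext u v
    show E c (u * v) * (E c u)⁻¹ * (E c v)⁻¹ = β u v
    rw [Ekey c hc u v]
    simp [mul_comm, mul_left_comm, mul_assoc]
  have Epm : ∀ c : ℝˣ, (c = 1 ∨ c = -1) → ∀ t : T, E c t = 1 ∨ E c t = -1 := by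
    intro c hc t
    simp only [E]
    split
    · exact hμpm _
    · next h =>
      rcases hc with rfl | rfl <;>
        rcases hμpm ⟨g⁻¹ * t, hmem t h⟩ with h1 | h1 <;>
        rcases unit_pm (βsq g (g⁻¹ * t)) with h2 | h2 <;>
        simp [h1, h2]
  have Eg : ∀ c : ℝˣ, E c g = c := by
    intro c
    simp only [E]
    rw [dif_neg hgK]
    rw [show (⟨g⁻¹ * g, hmem g hgK⟩ : K) = 1 from by ext; simp]
    rw [inv_mul_cancel, μ1, βu1, mul_one, mul_one]
  have Euniq : ∀ (η : T → ℝˣ) (c : ℝˣ),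
      polar η = β → (∀ k : K, η (k : T) = μ k) → η g = c → η = E c := by
    intro η c hηpol hηext hcg
    funext t
    by_cases h : t ∈ K
    · simp only [E]
      rw [dif_pos h]
      exact hηext ⟨t, h⟩
    · have hb := congrFun (congrFun hηpol g) (g⁻¹ * t)
      simp only [polar] at hb
      rw [mul_inv_cancel_left] at hb
      have hext' : η (g⁻¹ * t) = μ ⟨g⁻¹ * t, hmem t h⟩ := hηext ⟨g⁻¹ * t, hmem t h⟩
      rw [hext', hcg] at hb
      simp only [E]
      rw [dif_neg h, ← hb]
      simp [mul_comm, mul_left_comm, mul_assoc]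
  have hone : (1 : ℝˣ) * 1 = 1 := by norm_num
  have hneg : (-1 : ℝˣ) * (-1) = 1 := by norm_num
  refine ⟨E 1, E (-1), ?_, ⟨⟨Epm 1 (Or.inl rfl), ?_⟩, Epol 1 hone, EK 1⟩,
    ⟨⟨Epm (-1) (Or.inr rfl), ?_⟩, Epol (-1) hneg, EK (-1)⟩, ?_⟩
  · intro h
    have := congrFun h g
    rw [Eg 1, Eg (-1)] at this
    exact unit_one_ne_neg_one this
  · rw [Epol 1 hone]; exact hβ
  · rw [Epol (-1) hneg]; exact hβ
  · rintro η ⟨⟨hηpm, -⟩, hηpol, hηext⟩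
    rcases hηpm g with h | h
    · exact Or.inl (Euniq η 1 hηpol hηext h)
    · exact Or.inr (Euniq η (-1) hηpol hηext h)
end

section
/- Let D be a unital associative real algebra endowed with a division grading D = ⊕_{g∈G} D_g by an abelian group G (i.e., every nonzero homogeneous element of D is invertible). Let X be an invertible element of D such that the inner automorphism Int(X) : Y ↦ X Y X⁻¹ maps D_g into D_g for every g ∈ G. Then there exists a nonzero homogeneous element X₀ ∈ D such that X Y X⁻¹ = X₀ Y X₀⁻¹ for all Y ∈ D. -/
/-!
Since `Int(X)` preserves each `D_h`, for `y ∈ D_h` comparing the degree `g + h` components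
of `X y = (X y X⁻¹) X` shows that every homogeneous component `X_g` of `X` satisfies
`X_g y = (X y X⁻¹) X_g`. A nonzero component `X_g` is a unit by the division grading, so
`X⁻¹ X_g` commutes with all homogeneous elements, hence is central, and `Int(X) = Int(X_g)`.
-/

open DirectSum

namespace DirectSum

variable {ι M σ : Type*} [DecidableEq ι] [AddCommMonoid M] [SetLike σ M]
  [AddSubmonoidClass σ M] (ℳ : ι → σ) [Decomposition ℳ]

theorem exists_coe_decompose_ne_zero {x : M} (hx : x ≠ 0) :
    ∃ i, (decompose ℳ x i : M) ≠ 0 := by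
  have hdx : decompose ℳ x ≠ 0 := by
    rwa [← decompose_zero ℳ, (decompose ℳ).injective.ne_iff]
  obtain ⟨i, hi⟩ := DFunLike.ne_iff.mp hdx
  rw [zero_apply] at hi
  exact ⟨i, by rwa [Ne, ZeroMemClass.coe_eq_zero]⟩

end DirectSum

section GradedRing

variable {ι A σ : Type*} [DecidableEq ι] [Semiring A] [SetLike σ A] [AddSubmonoidClass σ A]
  (𝒜 : ι → σ)

theorem DirectSum.Decomposition.commute_of_forall_mem [Decomposition 𝒜] {a : A}
    (h : ∀ i, ∀ y ∈ 𝒜 i, Commute a y) (x : A) : Commute a x := by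
  induction x using DirectSum.Decomposition.inductionOn 𝒜 with
  | zero => exact Commute.zero_right a
  | homogeneous m => exact h _ _ m.2
  | add _ _ hx hx' => exact hx.add_right hx'

variable [AddCancelCommMonoid ι] [GradedRing 𝒜]

theorem DirectSum.coe_decompose_mul_eq_mul_coe_decompose {x y z : A} {i : ι}
    (hy : y ∈ 𝒜 i) (hz : z ∈ 𝒜 i) (hxyz : x * y = z * x) (j : ι) :
    (decompose 𝒜 x j : A) * y = z * decompose 𝒜 x j := by
  rw [← coe_decompose_mul_add_of_right_mem 𝒜 hy, hxyz, add_comm,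
    coe_decompose_mul_add_of_left_mem 𝒜 hz]

theorem Units.conj_eq_conj_of_val_eq_coe_decompose {X U : Aˣ}
    (hX : ∀ i, ∀ y ∈ 𝒜 i, (X : A) * y * ↑X⁻¹ ∈ 𝒜 i) {j : ι}
    (hU : (U : A) = decompose 𝒜 (X : A) j) (Y : A) :
    (X : A) * Y * ↑X⁻¹ = U * Y * ↑U⁻¹ := by
  have hcomm : ∀ i, ∀ y ∈ 𝒜 i, Commute ((X⁻¹ * U : Aˣ) : A) y := by
    intro i y hy
    have hUy : (U : A) * y = X * y * ↑X⁻¹ * U := by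
      rw [hU]
      exact coe_decompose_mul_eq_mul_coe_decompose 𝒜 hy (hX i y hy)
        (by simp [mul_assoc]) j
    simp only [Commute, SemiconjBy, Units.val_mul, mul_assoc, hUy]
    simp [← mul_assoc]
  have hY := Decomposition.commute_of_forall_mem 𝒜 hcomm Y
  calc (X : A) * Y * ↑X⁻¹ = X * (Y * ↑(X⁻¹ * U)) * ↑(X⁻¹ * U)⁻¹ * ↑X⁻¹ := by
        simp [mul_assoc]
    _ = X * (↑(X⁻¹ * U) * Y) * ↑(X⁻¹ * U)⁻¹ * ↑X⁻¹ := by rw [hY.eq]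
    _ = U * Y * ↑U⁻¹ := by simp [mul_assoc]

end GradedRing

/-- Let `D` be a unital associative real algebra with a division grading
`D = ⊕_{g ∈ G} D_g` by an abelian group `G` (every nonzero homogeneous element is
invertible).  If `X ∈ Dˣ` is such that `Int(X) : Y ↦ X Y X⁻¹` maps each `D_g` into
itself, then there is a nonzero homogeneous `X₀` (a homogeneous unit) such that
`X Y X⁻¹ = X₀ Y X₀⁻¹` for all `Y ∈ D`. -/
theorem stmt9 {G : Type*} [AddCommGroup G] [DecidableEq G]
    {D : Type*} [Ring D] [Algebra ℝ D]
    (𝒜 : G → Submodule ℝ D) [GradedAlgebra 𝒜]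
    (hdiv : ∀ (g : G) (x : D), x ∈ 𝒜 g → x ≠ 0 → IsUnit x)
    (X : Dˣ) (hX : ∀ (g : G), ∀ y ∈ 𝒜 g, (X : D) * y * ((X⁻¹ : Dˣ) : D) ∈ 𝒜 g) :
    ∃ X₀ : Dˣ, (∃ g : G, (X₀ : D) ∈ 𝒜 g) ∧
      ∀ Y : D, (X : D) * Y * ((X⁻¹ : Dˣ) : D) = (X₀ : D) * Y * ((X₀⁻¹ : Dˣ) : D) := by
  cases subsingleton_or_nontrivial D
  · exact ⟨1, ⟨0, SetLike.one_mem_graded 𝒜⟩, fun _ => Subsingleton.elim _ _⟩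
  obtain ⟨g, hg⟩ := exists_coe_decompose_ne_zero 𝒜 X.ne_zero
  obtain ⟨X₀, hX₀⟩ := hdiv g _ (SetLike.coe_mem _) hg
  exact ⟨X₀, ⟨g, hX₀ ▸ SetLike.coe_mem _⟩,
    Units.conj_eq_conj_of_val_eq_coe_decompose 𝒜 hX hX₀⟩
end

section
/- Let A = a + bi + cj + dk be a nonzero quaternion and define φ : ℍ → ℍ by φ(X) = A⁻¹ · X̄ · A, where X̄ is the quaternion conjugate. Then φ is an involution (i.e., φ∘φ = id) if and only if either b = c = d = 0 or a = 0. If b = c = d = 0, then φ equals quaternion conjugation and its fixed subspace {X ∈ ℍ ∣ φ(X) = X} has real dimension 1; if a = 0, the fixed subspace {X ∈ ℍ ∣ φ(X) = X} has real dimension 3. -/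
/-!
The map `φ(X) = A⁻¹ X̄ A` satisfies `φ(φ(X)) = U X U⁻¹` with `U = A⁻¹ Ā = Ā² / |A|²`, so `φ` is an
involution iff `Ā²` is central, i.e. real. Since `Im(A²) = 2 Re(A) Im(A)`, this happens iff `A` is
real or purely imaginary. A real `A` is central, so `φ` is conjugation, fixing exactly `ℝ`. For a
purely imaginary `A`, `X̄ A - A X = 2 ⟪A, X⟫`, so the fixed points of `φ` are the hyperplane `A^⊥`.
-/

open Quaternion

theorem inv_mul_mul_eq_iff {G₀ : Type*} [GroupWithZero G₀] {a : G₀} (ha : a ≠ 0) (b c : G₀) :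
    a⁻¹ * b * a = c ↔ b * a = a * c := by
  rw [mul_assoc, inv_mul_eq_iff_eq_mul₀ ha]

theorem inv_mul_star_inv_mul_star_mul_mul {R : Type*} [DivisionRing R] [StarRing R] (a x : R) :
    a⁻¹ * star (a⁻¹ * star x * a) * a = (a⁻¹ * star a) * x * (a⁻¹ * star a)⁻¹ := by
  simp only [star_mul, star_star, star_inv₀, mul_inv_rev, inv_inv, mul_assoc]

namespace Quaternion

variable {R : Type*}

theorem im_eq_zero_iff [CommRing R] {a : ℍ[R]} :
    a.im = 0 ↔ a.imI = 0 ∧ a.imJ = 0 ∧ a.imK = 0 := by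
  simp [Quaternion.ext_iff]

theorem im_mul_self [CommRing R] (a : ℍ[R]) : (a * a).im = (2 * a.re) • a.im := by
  ext <;> simp <;> ring

theorem im_star_mul_star [CommRing R] (a : ℍ[R]) :
    (star a * star a).im = -((2 * a.re) • a.im) := by
  rw [← star_mul, im_star, im_mul_self]

theorem forall_mul_comm_iff [Field R] [CharZero R] {u : ℍ[R]} :
    (∀ x : ℍ[R], u * x = x * u) ↔ u.im = 0 := by
  refine ⟨fun h => ?_, fun h x => ?_⟩
  · have key (x : ℍ[R]) : u.imK * x.imI = u.imI * x.imK ∧ u.imI * x.imJ = u.imJ * x.imI := by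
      have hx := Quaternion.ext_iff.mp (h x)
      simp only [re_mul, imI_mul, imJ_mul, imK_mul] at hx
      exact ⟨by linear_combination hx.2.2.1 / 2, by linear_combination hx.2.2.2 / 2⟩
    obtain ⟨hk, hj⟩ := key ⟨0, 1, 0, 0⟩
    obtain ⟨-, hi⟩ := key ⟨0, 0, 1, 0⟩
    simp only [mul_one, mul_zero] at hi hj hk
    exact im_eq_zero_iff.mpr ⟨hi, hj.symm, hk⟩
  · rw [← re_add_im u, h, add_zero, coe_commutes]

theorem im_inv_mul_star_eq_zero_iff [Field R] [LinearOrder R] [IsStrictOrderedRing R]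
    {a : ℍ[R]} : (a⁻¹ * star a).im = 0 ↔ a.re = 0 ∨ a.im = 0 := by
  rw [inv_def, smul_mul_assoc, im_smul, im_star_mul_star, smul_neg, neg_eq_zero, smul_smul,
    smul_eq_zero, mul_eq_zero, mul_eq_zero, inv_eq_zero, normSq_eq_zero,
    or_iff_right two_ne_zero, or_iff_right_of_imp fun (h : a = 0) => by simp [h]]

theorem mem_span_one_iff_star_eq_self [CommRing R] [NoZeroDivisors R] [CharZero R] {x : ℍ[R]} :
    x ∈ R ∙ (1 : ℍ[R]) ↔ star x = x := by
  rw [Submodule.mem_span_singleton, star_eq_self]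
  constructor
  · rintro ⟨r, rfl⟩
    simp [← coe_one, smul_coe]
  · exact fun h => ⟨x.re, by rw [← coe_one, smul_coe, mul_one, ← h]⟩

theorem star_mul_sub_mul_of_re_eq_zero {a : ℍ[ℝ]} (ha : a.re = 0) (x : ℍ[ℝ]) :
    star x * a - a * x = ((2 * inner ℝ a x : ℝ) : ℍ[ℝ]) := by
  ext <;> simp [inner_def, ha] <;> ring

theorem inv_mul_star_mul_eq_self_iff_inner_eq_zero {a : ℍ[ℝ]} (ha : a.re = 0) (ha₀ : a ≠ 0)
    (x : ℍ[ℝ]) : a⁻¹ * star x * a = x ↔ inner ℝ a x = 0 := by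
  rw [inv_mul_mul_eq_iff ha₀, ← sub_eq_zero, star_mul_sub_mul_of_re_eq_zero ha,
    ← coe_zero, coe_inj, mul_eq_zero, or_iff_right two_ne_zero]

end Quaternion

/-- For a nonzero quaternion `A = a + bi + cj + dk`, the map `φ(X) = A⁻¹ · X̄ · A` is an
involution iff `b = c = d = 0` or `a = 0`.  If `b = c = d = 0` then `φ` is quaternion
conjugation and its fixed subspace has real dimension 1; if `a = 0` the fixed subspace
has real dimension 3. -/
theorem stmt13 (A : Quaternion ℝ) (hA : A ≠ 0) :
    ((∀ X : Quaternion ℝ, A⁻¹ * star (A⁻¹ * star X * A) * A = X) ↔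
      ((A.imI = 0 ∧ A.imJ = 0 ∧ A.imK = 0) ∨ A.re = 0)) ∧
    ((A.imI = 0 ∧ A.imJ = 0 ∧ A.imK = 0) →
      (∀ X : Quaternion ℝ, A⁻¹ * star X * A = star X) ∧
      ∃ S : Submodule ℝ (Quaternion ℝ),
        (S : Set (Quaternion ℝ)) = {X : Quaternion ℝ | A⁻¹ * star X * A = X} ∧
        Module.finrank ℝ S = 1) ∧
    (A.re = 0 →
      ∃ S : Submodule ℝ (Quaternion ℝ),
        (S : Set (Quaternion ℝ)) = {X : Quaternion ℝ | A⁻¹ * star X * A = X} ∧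
        Module.finrank ℝ S = 3) := by
  have hU : A⁻¹ * star A ≠ 0 := mul_ne_zero (inv_ne_zero hA) (star_ne_zero.mpr hA)
  refine ⟨?_, fun hAim => ?_, fun hAre => ?_⟩
  · simp only [inv_mul_star_inv_mul_star_mul_mul, mul_inv_eq_iff_eq_mul₀ hU]
    rw [forall_mul_comm_iff, im_inv_mul_star_eq_zero_iff, im_eq_zero_iff, or_comm]
  · have hφ (X : ℍ[ℝ]) : A⁻¹ * star X * A = star X :=
      (inv_mul_mul_eq_iff hA _ _).mpr (forall_mul_comm_iff.mpr (im_eq_zero_iff.mpr hAim) _).symm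
    refine ⟨hφ, ℝ ∙ 1, ?_, finrank_span_singleton one_ne_zero⟩
    ext X
    simp only [SetLike.mem_coe, Set.mem_ofPred_eq, hφ, mem_span_one_iff_star_eq_self]
  · have : Fact (Module.finrank ℝ ℍ[ℝ] = 3 + 1) := ⟨finrank_eq_four⟩
    refine ⟨(ℝ ∙ A)ᗮ, ?_, Submodule.finrank_orthogonal_span_singleton hA⟩
    ext X
    simp only [SetLike.mem_coe, Set.mem_ofPred_eq,
      Submodule.mem_orthogonal_singleton_iff_inner_right,
      inv_mul_star_mul_eq_self_iff_inner_eq_zero hAre hA]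
end

section
/- Let T be a finite abelian group and let β : T × T → ℂˣ be a ℂ-valued alternating bicharacter (multiplicative in each variable with β(u,u)=1) whose radical rad(β) := {t ∈ T ∣ β(u,t)=1 for all u ∈ T} is trivial. Then for every u ∈ T: u ∈ T^{[2]} (i.e., u is a square in T) if and only if β(u,v) = 1 for all v ∈ T_{[2]} (i.e., for all v ∈ T with v² = e). -/
/-- A ℂ-valued alternating bicharacter on a (multiplicative) finite abelian group. -/
def IsAltBicharC {T : Type*} [CommGroup T] (β : T → T → ℂˣ) : Prop :=
  (∀ u v w : T, β (u * v) w = β u w * β v w) ∧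
  (∀ u v w : T, β u (v * w) = β u v * β u w) ∧
  (∀ u : T, β u u = 1)

/-!
Being skew-symmetric with trivial radical, `β` embeds `T` into its character group `T →* ℂˣ`. The elements `u`
with `β(u, T_{[2]}) = 1` are thereby embedded into the characters trivial on `T_{[2]}`, i.e. the
characters of `T ⧸ T_{[2]}`, of which there are `|T ⧸ T_{[2]}| = |T^{[2]}|`. The squares lie among
these elements, so they are all of them.
-/

open MonoidHom

section Duality

variable {T M : Type*} [CommGroup T] [Finite T] [CommMonoid M]
  [HasEnoughRootsOfUnity M (Monoid.exponent T)]

theorem mem_range_powMonoidHom_iff_of_injective {χ : T →* (T →* Mˣ)}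
    (hχ : Function.Injective χ) (n : ℕ) (u : T) :
    u ∈ (powMonoidHom n : T →* T).range ↔ ∀ v : T, v ^ n = 1 → χ u v = 1 := by
  set K := (powMonoidHom n : T →* T).ker
  set A := ((domRestrictHom K Mˣ).comp χ).ker
  have mem_A : ∀ u, u ∈ A ↔ ∀ v : T, v ^ n = 1 → χ u v = 1 := by
    intro u
    simp only [A, K, mem_ker, coe_comp, Function.comp_apply, domRestrictHom_apply,
      DFunLike.ext_iff, domRestrict_apply, one_apply, Subtype.forall, powMonoidHom_apply]
  have range_le : (powMonoidHom n : T →* T).range ≤ A := by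
    rintro _ ⟨w, rfl⟩
    refine (mem_A _).mpr fun v hv ↦ ?_
    rw [powMonoidHom_apply, map_pow, pow_apply, ← map_pow, hv, map_one]
  have card_le : Nat.card A ≤ Nat.card (powMonoidHom n : T →* T).range := calc
    Nat.card A = Nat.card (A.map χ) := (Subgroup.card_map_of_injective hχ).symm
    _ ≤ Nat.card (domRestrictHom K Mˣ).ker :=
      Subgroup.card_le_of_le (Subgroup.map_le_iff_le_comap.mpr le_rfl)
    _ = Nat.card (T ⧸ K) := CommGroup.card_domRestrictHom_ker M K
    _ = _ := Nat.card_congr (QuotientGroup.quotientKerEquivRange _).toEquiv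
  rw [Subgroup.eq_of_le_of_card_ge range_le card_le, mem_A]

end Duality

namespace IsAltBicharC

variable {T : Type*} [CommGroup T] {β : T → T → ℂˣ}

theorem mul_swap_eq_one (hβ : IsAltBicharC β) (u v : T) : β u v * β v u = 1 := by
  obtain ⟨mul_left, mul_right, alt⟩ := hβ
  have h := alt (u * v)
  rwa [mul_left, mul_right, mul_right, alt, alt, one_mul, mul_one] at h

def toMonoidHom (hβ : IsAltBicharC β) : T →* (T →* ℂˣ) :=
  MonoidHom.mk' (fun u ↦ MonoidHom.mk' (β u) (hβ.2.1 u)) fun u v ↦ by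
    ext w
    exact congrArg Units.val (hβ.1 u v w)

theorem toMonoidHom_apply (hβ : IsAltBicharC β) (u v : T) : hβ.toMonoidHom u v = β u v := rfl

theorem toMonoidHom_injective (hβ : IsAltBicharC β)
    (hrad : ∀ t : T, (∀ u : T, β u t = 1) → t = 1) : Function.Injective hβ.toMonoidHom := by
  refine (injective_iff_map_eq_one _).mpr fun t ht ↦ hrad t fun u ↦ ?_
  have h := hβ.mul_swap_eq_one t u
  rwa [← toMonoidHom_apply hβ t u, ht, one_apply, one_mul] at h

end IsAltBicharC

/-- Let `β` be a ℂ-valued alternating bicharacter with trivial radical on a finite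
abelian group `T`.  Then `u ∈ T` is a square iff `β(u,v) = 1` for every `v ∈ T` with
`v² = e`. -/
theorem stmt15 {T : Type*} [CommGroup T] [Fintype T]
    (β : T → T → ℂˣ) (hβ : IsAltBicharC β)
    (hrad : ∀ t : T, (∀ u : T, β u t = 1) → t = 1) (u : T) :
    (∃ w : T, w ^ 2 = u) ↔ (∀ v : T, v ^ 2 = 1 → β u v = 1) := by
  -- so that `ℂ` has enough roots of unity of order `exponent T`
  have : NeZero (Monoid.exponent T) := ⟨Monoid.exponent_ne_zero_of_finite⟩
  simpa only [mem_range, powMonoidHom_apply, IsAltBicharC.toMonoidHom_apply] using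
    mem_range_powMonoidHom_iff_of_injective (hβ.toMonoidHom_injective hrad) 2 u
end

section
/- Let T be a finite abelian group and let β : T × T → ℂˣ be a ℂ-valued alternating bicharacter whose radical is trivial. Then for every u ∈ T and every natural number p ≥ 0: the coset u·T_{[2^p]} is a square in the quotient group T/T_{[2^p]} if and only if β(u, v^{2^p}) = 1 for all v ∈ T_{[2^{p+1}]}. -/
/-!
The pairing `t ↦ β(·, t)` identifies `T` with its character group, so every subgroup `H` is
the set of `u` with `β(u, t) = 1` for all `t` in its annihilator `H^⊥`. The coset `u·T_[2^p]`
is a square iff `u ∈ T^[2]·T_[2^p]`, and `(T^[2]·T_[2^p])^⊥ = T_[2] ∩ T^[2^p]`: nondegeneracy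
gives `(T^[n])^⊥ = T_[n]`, while `(T_[n])^⊥` contains `T^[n]` and has order
`|T/T_[n]| = |T^[n]|`.
The elements of `T_[2] ∩ T^[2^p]` are exactly the `v^(2^p)` with `v ∈ T_[2^(p+1)]`.
-/

theorem QuotientGroup.exists_pow_eq_mk_iff {T : Type*} [CommGroup T] (K : Subgroup T)
    (n : ℕ) (u : T) :
    (∃ w : T ⧸ K, w ^ n = QuotientGroup.mk u) ↔ u ∈ (powMonoidHom n).range ⊔ K := by
  simp only [Subgroup.mem_sup, MonoidHom.mem_range, powMonoidHom_apply, exists_exists_eq_and]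
  constructor
  · rintro ⟨w, hw⟩
    obtain ⟨a, rfl⟩ := QuotientGroup.mk_surjective w
    exact ⟨a, (a ^ n)⁻¹ * u, QuotientGroup.eq.mp hw, mul_inv_cancel_left _ _⟩
  · rintro ⟨a, k, hk, rfl⟩
    exact ⟨a, by simp [hk]⟩

namespace MonoidHom

variable {T M : Type*} [CommGroup T] [CommMonoid M]

/-- Defined as the preimage under `B.flip` of the characters trivial on `H`, so that
`CommGroup.card_domRestrictHom_ker` computes its order. -/
def annihilator (B : T →* T →* Mˣ) (H : Subgroup T) : Subgroup T :=
  (domRestrictHom H Mˣ).ker.comap B.flip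

variable {B : T →* T →* Mˣ}

theorem mem_annihilator {H : Subgroup T} {t : T} :
    t ∈ B.annihilator H ↔ ∀ h ∈ H, B h t = 1 := by
  simp [annihilator]

theorem annihilator_sup (H K : Subgroup T) :
    B.annihilator (H ⊔ K) = B.annihilator H ⊓ B.annihilator K := by
  ext t
  simp only [Subgroup.mem_inf, mem_annihilator]
  constructor
  · exact fun ht => ⟨fun h hh => ht h (Subgroup.mem_sup_left hh),
      fun k hk => ht k (Subgroup.mem_sup_right hk)⟩
  · rintro ⟨hH, hK⟩ _ hx
    obtain ⟨h, hh, k, hk, rfl⟩ := Subgroup.mem_sup.mp hx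
    rw [map_mul, mul_apply, hH h hh, hK k hk, one_mul]

theorem range_powMonoidHom_le_annihilator_ker (n : ℕ) :
    (powMonoidHom n : T →* T).range ≤ B.annihilator (powMonoidHom n).ker := by
  rintro _ ⟨s, rfl⟩
  refine mem_annihilator.mpr fun k hk => ?_
  have hkn : k ^ n = 1 := hk
  rw [powMonoidHom_apply, map_pow, ← pow_apply, ← map_pow, hkn, map_one, one_apply]

theorem annihilator_range_powMonoidHom (hB : Function.Injective B.flip) (n : ℕ) :
    B.annihilator (powMonoidHom n : T →* T).range = (powMonoidHom n).ker := by
  ext t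
  have hflip (x : T) : B (x ^ n) t = B.flip (t ^ n) x := by
    simp only [map_pow, pow_apply, flip_apply]
  simp only [mem_annihilator, mem_range, powMonoidHom_apply, forall_exists_index,
    forall_apply_eq_imp_iff, mem_ker, hflip]
  rw [← (injective_iff_map_eq_one' _).mp hB, MonoidHom.ext_iff]
  simp only [one_apply]

section Finite

variable [Finite T] [HasEnoughRootsOfUnity M (Monoid.exponent T)]

theorem bijective_flip_of_injective (hB : Function.Injective B.flip) :
    Function.Bijective B.flip := by
  have hcard := CommGroup.card_monoidHom_of_hasEnoughRootsOfUnity T M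
  have : Finite (T →* Mˣ) := Nat.finite_of_card_ne_zero (hcard ▸ Nat.card_pos.ne')
  exact hB.bijective_of_nat_card_le hcard.le

theorem card_annihilator (hB : Function.Bijective B.flip) (H : Subgroup T) :
    Nat.card (B.annihilator H) = Nat.card (T ⧸ H) := by
  rw [← CommGroup.card_domRestrictHom_ker M H]
  exact Nat.card_congr (Equiv.subtypeEquiv (Equiv.ofBijective _ hB) fun _ => Iff.rfl)

theorem annihilator_ker_powMonoidHom (hB : Function.Bijective B.flip) (n : ℕ) :
    B.annihilator (powMonoidHom n : T →* T).ker = (powMonoidHom n).range := by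
  refine (Subgroup.eq_of_le_of_card_ge (range_powMonoidHom_le_annihilator_ker n) ?_).symm
  rw [card_annihilator hB,
    ← Nat.card_congr (QuotientGroup.quotientKerEquivRange (powMonoidHom n : T →* T)).toEquiv]

theorem mem_iff_forall_mem_annihilator (hB : Function.Surjective B.flip) (H : Subgroup T) (u : T) :
    u ∈ H ↔ ∀ t ∈ B.annihilator H, B u t = 1 := by
  rw [← CommGroup.forall_monoidHom_apply_eq_one_iff M H u, hB.forall]
  simp only [mem_annihilator, flip_apply]

end Finite

end MonoidHom

/-- Let `β` be a ℂ-valued alternating bicharacter with trivial radical on a finite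
abelian group `T`, and let `K = T_{[2^p]} = {t ∣ t^{2^p} = e}`.  Then for `u ∈ T`,
the coset `u·K` is a square in `T/K` iff `β(u, v^{2^p}) = 1` for all
`v ∈ T_{[2^{p+1}]}`. -/
theorem stmt16 {T : Type*} [CommGroup T] [Fintype T]
    (β : T → T → ℂˣ) (hβ : IsAltBicharC β)
    (hrad : ∀ t : T, (∀ u : T, β u t = 1) → t = 1)
    (u : T) (p : ℕ)
    (K : Subgroup T) (hKdef : ∀ t : T, t ∈ K ↔ t ^ (2 ^ p) = 1) :
    (∃ w : T ⧸ K, w ^ 2 = QuotientGroup.mk u) ↔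
      (∀ v : T, v ^ (2 ^ (p + 1)) = 1 → β u (v ^ (2 ^ p)) = 1) := by
  obtain ⟨hmul_left, hmul_right, -⟩ := hβ
  let B : T →* T →* ℂˣ := MonoidHom.mk' (fun x => MonoidHom.mk' (β x) (hmul_right x))
    fun x y => MonoidHom.ext (hmul_left x y)
  have hB : Function.Bijective B.flip := MonoidHom.bijective_flip_of_injective <|
    (injective_iff_map_eq_one _).mpr fun t ht => hrad t fun x => DFunLike.congr_fun ht x
  obtain rfl : K = (powMonoidHom (2 ^ p)).ker := by ext t; exact hKdef t
  rw [QuotientGroup.exists_pow_eq_mk_iff, MonoidHom.mem_iff_forall_mem_annihilator hB.2,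
    MonoidHom.annihilator_sup, MonoidHom.annihilator_range_powMonoidHom hB.1,
    MonoidHom.annihilator_ker_powMonoidHom hB]
  constructor
  · intro h v hv
    have hsq : (v ^ 2 ^ p) ^ 2 = 1 := by rw [← pow_mul, ← pow_succ, hv]
    exact h _ ⟨hsq, v, rfl⟩
  · rintro h _ ⟨hsq, v, rfl⟩
    exact h v (by rw [pow_succ, pow_mul]; exact hsq)
end

section
/- Let T be a finite abelian group and let μ and η be two different quadratic forms on T with common polarization β := β_μ = β_η of type I, such that Arf(μ) = Arf(η) = +1. Then there exists an element b ∈ T such that {t ∈ T ∣ μ(t) = η(t)} = b^⊥ := {v ∈ T ∣ β(b,v)=1} and μ(b) = η(b) = +1. -/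
/-- `ArfEq μ v` means the Arf invariant of `μ` is defined and equal to `v`. -/
def ArfEq {α : Type*} (μ : α → ℝˣ) (v : ℝˣ) : Prop :=
  (v = 1 ∧ Nat.card {a : α // μ a = -1} < Nat.card {a : α // μ a = 1}) ∨
  (v = -1 ∧ Nat.card {a : α // μ a = 1} < Nat.card {a : α // μ a = -1})

private lemma sum_char_eq_zero' {T : Type*} [CommGroup T] [Fintype T] (ψ : T → ℝ)
    (hmul : ∀ u v, ψ (u * v) = ψ u * ψ v) (hnt : ∃ u, ψ u ≠ 1) : ∑ t, ψ t = 0 := by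
  obtain ⟨u, hu⟩ := hnt
  have h1 : ∑ t, ψ (u * t) = ∑ t, ψ t :=
    Fintype.sum_equiv (Equiv.mulLeft u) _ _ (fun t => rfl)
  have h2 : ∑ t, ψ (u * t) = ψ u * ∑ t, ψ t := by
    simp only [hmul, Finset.mul_sum]
  have h3 : (ψ u - 1) * ∑ t, ψ t = 0 := by
    rw [h2] at h1; ring_nf; linarith
  rcases mul_eq_zero.mp h3 with h | h
  · exact absurd (by linarith [sub_eq_zero.mp h] : ψ u = 1) hu
  · exact h

private lemma sum_pos_of_arf' {T : Type*} [Fintype T] (μ : T → ℝˣ)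
    (hv : ∀ t, μ t = 1 ∨ μ t = -1) (h : ArfEq μ 1) :
    0 < ∑ t, ((μ t : ℝˣ) : ℝ) := by
  rcases h with ⟨_, hlt⟩ | ⟨h, _⟩
  · have hfilt : Finset.univ.filter (fun t => ¬ μ t = 1) =
        Finset.univ.filter (fun t => μ t = -1) := by
      ext t
      simp only [Finset.mem_filter, Finset.mem_univ, true_and]
      rcases hv t with h' | h' <;> simp [h']
    have hsplit := Finset.sum_filter_add_sum_filter_not Finset.univ (fun t => μ t = 1)
        (fun t => ((μ t : ℝˣ) : ℝ))
    have e1 : ∑ t ∈ Finset.univ.filter (fun t => μ t = 1), ((μ t : ℝˣ) : ℝ) =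
        (Finset.univ.filter (fun t => μ t = 1)).card := by
      have : ∑ t ∈ Finset.univ.filter (fun t => μ t = 1), ((μ t : ℝˣ) : ℝ) =
          ∑ _t ∈ Finset.univ.filter (fun t => μ t = 1), (1 : ℝ) :=
        Finset.sum_congr rfl (fun t ht => by simp [(Finset.mem_filter.mp ht).2])
      rw [this]; simp
    have e2 : ∑ t ∈ Finset.univ.filter (fun t => ¬ μ t = 1), ((μ t : ℝˣ) : ℝ) =
        -((Finset.univ.filter (fun t => μ t = -1)).card : ℝ) := by
      rw [hfilt]
      have : ∑ t ∈ Finset.univ.filter (fun t => μ t = -1), ((μ t : ℝˣ) : ℝ) =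
          ∑ _t ∈ Finset.univ.filter (fun t => μ t = -1), (-1 : ℝ) :=
        Finset.sum_congr rfl (fun t ht => by simp [(Finset.mem_filter.mp ht).2])
      rw [this]; simp
    have c1 : Nat.card {a : T // μ a = 1} = (Finset.univ.filter (fun t => μ t = 1)).card := by
      rw [Nat.card_eq_fintype_card, Fintype.card_subtype]
    have c2 : Nat.card {a : T // μ a = -1} = (Finset.univ.filter (fun t => μ t = -1)).card := by
      rw [Nat.card_eq_fintype_card, Fintype.card_subtype]
    rw [← hsplit, e1, e2]
    rw [c1, c2] at hlt
    have := (Nat.cast_lt (α := ℝ)).mpr hlt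
    linarith
  · have := congrArg (Units.val) h
    norm_num at this

/-- Let `μ ≠ η` be quadratic forms on a finite abelian group `T` with common
polarization `β` of type I and `Arf(μ) = Arf(η) = +1`.  Then there is `b ∈ T` with
`{t ∣ μ(t) = η(t)} = b^⊥` and `μ(b) = η(b) = +1`. -/
theorem stmt17 {T : Type*} [CommGroup T] [Fintype T]
    (μ η : T → ℝˣ) (hμ : IsQuadForm μ) (hη : IsQuadForm η)
    (hne : μ ≠ η) (hpol : polar μ = polar η)
    (hI : ∀ t : T, (∀ u : T, polar μ u t = 1) → t = 1)
    (hArfμ : ArfEq μ 1) (hArfη : ArfEq η 1) :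
    ∃ b : T, {t : T | μ t = η t} = {v : T | polar μ b v = 1} ∧ μ b = 1 ∧ η b = 1 := by
  obtain ⟨hμv, hβ1, hβ2, hβ3⟩ := hμ
  obtain ⟨hηv, -⟩ := hη
  have hpm : ∀ x : ℝˣ, (x = 1 ∨ x = -1) → x⁻¹ = x := by rintro x (rfl | rfl) <;> norm_num
  have hsq : ∀ x : ℝˣ, (x = 1 ∨ x = -1) → x * x = 1 := by rintro x (rfl | rfl) <;> norm_num
  have hβv : ∀ u v, polar μ u v = 1 ∨ polar μ u v = -1 := by
    intro u v
    rcases hμv (u * v) with h1 | h1 <;> rcases hμv u with h2 | h2 <;>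
      rcases hμv v with h3 | h3 <;> simp [polar, h1, h2, h3]
  have hexpμ : ∀ u v, μ (u * v) = polar μ u v * μ u * μ v := by
    intro u v
    rcases hμv (u * v) with h1 | h1 <;> rcases hμv u with h2 | h2 <;>
      rcases hμv v with h3 | h3 <;> simp [polar, h1, h2, h3]
  have hexpη : ∀ u v, η (u * v) = polar μ u v * η u * η v := by
    intro u v
    rw [hpol]
    rcases hηv (u * v) with h1 | h1 <;> rcases hηv u with h2 | h2 <;>
      rcases hηv v with h3 | h3 <;> simp [polar, h1, h2, h3]
  have hμ1 : μ 1 = 1 := by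
    rcases hμv 1 with h | h
    · exact h
    · have h2 := hβ3 1
      simp [polar, h] at h2
  have hη1 : η 1 = 1 := by
    rcases hηv 1 with h | h
    · exact h
    · have h2 := hexpη 1 1
      rw [hβ3 1, one_mul, one_mul, h] at h2
      norm_num at h2
  set χ : T → ℝˣ := fun t => μ t * η t with hχdef
  have hχv : ∀ t, χ t = 1 ∨ χ t = -1 := by
    intro t; rcases hμv t with h1 | h1 <;> rcases hηv t with h2 | h2 <;> simp [hχdef, h1, h2]
  have hχmul : ∀ u v, χ (u * v) = χ u * χ v := by
    intro u v
    simp only [hχdef]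
    rw [hexpμ u v, hexpη u v]
    rcases hβv u v with h0 | h0 <;> rcases hμv u with h1 | h1 <;> rcases hμv v with h2 | h2 <;>
      rcases hηv u with h3 | h3 <;> rcases hηv v with h4 | h4 <;>
      rw [h0, h1, h2, h3, h4] <;> norm_num
  have hχ1 : χ 1 = 1 := by simp [hχdef, hμ1, hη1]
  set f : T → ℝ := fun t => ((χ t : ℝˣ) : ℝ) with hfdef
  set g : T → T → ℝ := fun b t => ((polar μ b t : ℝˣ) : ℝ) with hgdef
  have hcast1 : ∀ x : ℝˣ, ((x : ℝ) = 1) → x = 1 := fun x h => Units.ext (by simpa using h)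
  have hcol : ∀ t : T, t ≠ 1 → ∑ b, g b t = 0 := by
    intro t ht
    apply sum_char_eq_zero'
    · intro u v
      simp only [hgdef]
      rw [hβ1 u v t]
      push_cast
      ring
    · by_contra hc
      push_neg at hc
      exact ht (hI t (fun u => hcast1 _ (hc u)))
  have hg1 : ∀ b, g b 1 = 1 := by
    intro b
    simp only [hgdef]
    have h : polar μ b 1 = 1 := by
      simp [polar, hμ1]
    rw [h]; simp
  have hbig : ∑ t, f t * ∑ b, g b t = Fintype.card T := by
    rw [Finset.sum_eq_single 1]
    · have hsum : ∑ b : T, g b 1 = (Fintype.card T : ℝ) := by simp [hg1]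
      have hf1 : f 1 = 1 := by simp [hfdef, hχ1]
      rw [hsum, hf1, one_mul]
    · intro t _ ht
      rw [hcol t ht, mul_zero]
    · intro h; exact absurd (Finset.mem_univ 1) h
  have hswap : ∑ b, ∑ t, f t * g b t = Fintype.card T := by
    rw [Finset.sum_comm]
    rw [← hbig]
    exact Finset.sum_congr rfl (fun t _ => by rw [Finset.mul_sum])
  have hbex : ∃ b : T, ∑ t, f t * g b t ≠ 0 := by
    by_contra hc
    push_neg at hc
    rw [Finset.sum_congr rfl (fun b _ => hc b)] at hswap
    simp at hswap
    have h0 : Fintype.card T = 0 := by exact_mod_cast hswap.symm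
    exact (Fintype.card_pos (α := T)).ne' h0
  obtain ⟨b, hb⟩ := hbex
  have hψall : ∀ t, f t * g b t = 1 := by
    by_contra hc
    push_neg at hc
    apply hb
    apply sum_char_eq_zero'
    · intro u v
      simp only [hfdef, hgdef]
      rw [hχmul u v, hβ2 b u v]
      push_cast
      ring
    · exact hc
  have hχβ : ∀ t, χ t = polar μ b t := by
    intro t
    have h1 : χ t * polar μ b t = 1 := by
      apply Units.ext
      push_cast
      exact hψall t
    have h2 : χ t = (polar μ b t)⁻¹ := eq_inv_of_mul_eq_one_left h1
    rw [h2, hpm _ (hβv b t)]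
  refine ⟨b, ?_, ?_, ?_⟩
  · ext t
    simp only [Set.mem_setOf_eq, ← hχβ t]
    constructor
    · intro h
      simp only [hχdef, h]
      exact hsq _ (hηv t)
    · intro h
      have h2 : η t = (μ t)⁻¹ := eq_inv_of_mul_eq_one_left (by rw [mul_comm]; exact h)
      rw [h2, hpm _ (hμv t)]
  all_goals {
    have hχb : χ b = 1 := by rw [hχβ b, hβ3 b]
    have hμηb : μ b = η b := by
      have h2 : η b = (μ b)⁻¹ := eq_inv_of_mul_eq_one_left (by rw [mul_comm]; exact hχb)
      rw [h2, hpm _ (hμv b)]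
    have hμpos := sum_pos_of_arf' μ hμv hArfμ
    have hηpos := sum_pos_of_arf' η hηv hArfη
    have hterm : ∀ t, η t = μ (b * t) * μ b := by
      intro t
      have h1 : η t = χ t * μ t := by
        simp only [hχdef]
        rw [mul_comm (μ t), mul_assoc, hsq _ (hμv t), mul_one]
      rw [h1, hχβ t]
      simp only [polar]
      rw [mul_assoc, inv_mul_cancel, mul_one, hpm _ (hμv b)]
    have hkey : ∑ t, ((η t : ℝˣ) : ℝ) = ((μ b : ℝˣ) : ℝ) * ∑ t, ((μ t : ℝˣ) : ℝ) := by
      calc ∑ t, ((η t : ℝˣ) : ℝ)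
          = ∑ t, ((μ (b * t) : ℝˣ) : ℝ) * ((μ b : ℝˣ) : ℝ) :=
            Finset.sum_congr rfl (fun t _ => by rw [hterm t]; push_cast; ring)
        _ = (∑ t, ((μ (b * t) : ℝˣ) : ℝ)) * ((μ b : ℝˣ) : ℝ) := by rw [← Finset.sum_mul]
        _ = (∑ t, ((μ t : ℝˣ) : ℝ)) * ((μ b : ℝˣ) : ℝ) := by
            congr 1
            exact Fintype.sum_equiv (Equiv.mulLeft b) _ _ (fun t => rfl)
        _ = ((μ b : ℝˣ) : ℝ) * ∑ t, ((μ t : ℝˣ) : ℝ) := by ring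
    have hμb : μ b = 1 := by
      rcases hμv b with h | h
      · exact h
      · exfalso
        rw [h] at hkey
        simp at hkey
        linarith
    first
    | exact hμb
    | (rw [← hμηb]; exact hμb)
  }
end
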